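/- Let G be a countable directed graph, F a potential on G, β ∈ ℝ, and m an e^{βF}-conformal measure on P(G). Then the vector ψ defined by ψ_v = m(Z(v)) for v ∈ G_V is an A(β)-harmonic vector: it is non-zero, takes finite non-negative values, and satisfies ψ_v = Σ_{a : s(a) = v} e^{-βF(a)} ψ_{r(a)} for every vertex v. -/

import Mathlib

open MeasureTheory
open scoped ENNReal

/-- A countable directed graph: countable sets of vertices and arrows together with
source and range maps. -/
structure CDG where
  V : Type
  A : Type
  countV : Countable V
  countA : Countable A
  src : A → V
  rng : A → V

attribute [instance] CDG.countV CDG.countA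

namespace CDG

/-- The space `P(G)` of infinite paths in `G`. -/
abbrev PathSpace (G : CDG) : Type :=
  {p : ℕ → G.A // ∀ i : ℕ, G.rng (p i) = G.src (p (i + 1))}

/-- The source vertex of an infinite path. -/
def isrc {G : CDG} (p : G.PathSpace) : G.V := G.src (p.1 0)

/-- The shift map `σ` on `P(G)`. -/
def shift {G : CDG} (p : G.PathSpace) : G.PathSpace :=
  ⟨fun i => p.1 (i + 1), fun i => p.2 (i + 1)⟩

/-- A countable set carries the discrete (Borel) σ-algebra. -/
instance (G : CDG) : MeasurableSpace G.A := ⊤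

/-- A finite path in `G`: a base vertex together with a (possibly empty) string of
composable arrows starting at the base vertex.  A finite path with no arrows is a vertex. -/
structure FinPath (G : CDG) where
  base : G.V
  arrows : List G.A
  head_src : ∀ a ∈ arrows.head?, G.src a = base
  chain : arrows.Chain' fun a b => G.rng a = G.src b

namespace FinPath

variable {G : CDG}

/-- The length `|μ|` of a finite path. -/
def length (μ : FinPath G) : ℕ := μ.arrows.length

/-- The source `s(μ)` of a finite path. -/
def fsrc (μ : FinPath G) : G.V := μ.base

/-- The range `r(μ)` of a finite path. -/
def frng (μ : FinPath G) : G.V := μ.arrows.getLast?.elim μ.base G.rng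

/-- A vertex, regarded as a finite path of length `0`. -/
def ofVertex (G : CDG) (v : G.V) : FinPath G :=
  ⟨v, [], (by intro a ha; simp at ha), by simp [List.Chain']⟩

/-- Concatenation `μδ` of composable finite paths. -/
def concat (μ δ : FinPath G) (h : δ.base = μ.frng) : FinPath G where
  base := μ.base
  arrows := μ.arrows ++ δ.arrows
  head_src := by
    intro a ha
    cases hμ : μ.arrows with
    | nil =>
        rw [hμ] at ha
        simp only [List.nil_append] at ha
        have h1 : G.src a = δ.base := δ.head_src a ha
        have h2 : μ.frng = μ.base := by simp [FinPath.frng, hμ]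
        rw [h1, h, h2]
    | cons b l =>
        rw [hμ] at ha
        simp only [List.cons_append, List.head?_cons, Option.mem_def,
          Option.some.injEq] at ha
        cases ha
        exact μ.head_src _ (by rw [hμ]; rfl)
  chain := by
    refine List.IsChain.append μ.chain δ.chain ?_
    intro x hx y hy
    rw [Option.mem_def] at hx
    have h1 : μ.frng = G.rng x := by simp [FinPath.frng, hx]
    have h2 : G.src y = δ.base := δ.head_src y hy
    rw [h2, h, h1]

end FinPath

/-- The extension of a potential `F : G_Ar → ℝ` to finite paths:
`F(μ) = Σ_{i} F(a_i)`, with `F(v) = 0` for vertices. -/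
def pot {G : CDG} (F : G.A → ℝ) (μ : FinPath G) : ℝ := (μ.arrows.map F).sum

/-- The cylinder set `Z(μ)` of a finite path `μ`. -/
def cyl {G : CDG} (μ : FinPath G) : Set G.PathSpace :=
  {p | G.src (p.1 0) = μ.base ∧
    ∀ (i : ℕ) (h : i < μ.arrows.length), p.1 i = μ.arrows.get ⟨i, h⟩}

/-- The cylinder set `Z(v)` of a vertex `v`. -/
def cylV (G : CDG) (v : G.V) : Set G.PathSpace := {p | G.src (p.1 0) = v}

/-- An `e^{βF}`-conformal measure on `P(G)`: a non-zero Borel measure giving finite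
measure to each `Z(v)` and satisfying `m(σ(B ∩ Z(a))) = e^{βF(a)} m(B ∩ Z(a))`. -/
structure IsConformal (G : CDG) (F : G.A → ℝ) (β : ℝ)
    (m : Measure G.PathSpace) : Prop where
  ne_zero : m ≠ 0
  vert_fin : ∀ v : G.V, m (cylV G v) < ⊤
  conformal : ∀ (a : G.A) (B : Set G.PathSpace), MeasurableSet B →
      m (shift '' (B ∩ {p : G.PathSpace | p.1 0 = a})) =
        ENNReal.ofReal (Real.exp (β * F a)) * m (B ∩ {p : G.PathSpace | p.1 0 = a})

/-- The set `NW_G` of non-wandering vertices: those supporting a loop. -/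
def NW (G : CDG) : Set G.V :=
  {v | ∃ μ : FinPath G, 0 < μ.length ∧ μ.fsrc = v ∧ μ.frng = v}

/-- The set `V_∞` of sinks and infinite emitters. -/
def Vinf (G : CDG) : Set G.V :=
  {v | (∀ a : G.A, G.src a ≠ v) ∨ {a : G.A | G.src a = v}.Infinite}

/-- A hereditary subset of vertices. -/
def Hereditary (G : CDG) (H : Set G.V) : Prop :=
  ∀ a : G.A, G.src a ∈ H → G.rng a ∈ H

/-- A saturated subset of vertices. -/
def Saturated (G : CDG) (H : Set G.V) : Prop :=
  ∀ v : G.V, v ∉ Vinf G → (∀ a : G.A, G.src a = v → G.rng a ∈ H) → v ∈ H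

/-- `G` is cofinal when the only non-empty hereditary and saturated subset of
vertices is the set of all vertices. -/
def Cofinal (G : CDG) : Prop :=
  ∀ H : Set G.V, H.Nonempty → Hereditary G H → Saturated G H → H = Set.univ

/-- `P(G)_rec`: the paths passing through every arrow of `NW_Ar` infinitely often. -/
def recSet (G : CDG) : Set G.PathSpace :=
  {p | ∀ a : G.A, G.src a ∈ NW G → ∀ n : ℕ, ∃ i ≥ n, p.1 i = a}

/-- `P(G)_wan`: the paths visiting every vertex at most finitely many times. -/
def wanSet (G : CDG) : Set G.PathSpace :=
  {p | ∀ v : G.V, {i : ℕ | G.src (p.1 i) = v}.Finite}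

/-- The matrix entry `A(β)^n_{v,w} = Σ_μ e^{-βF(μ)} ∈ [0,∞]`, summing over finite
paths `μ` of length `n` with `s(μ) = v` and `r(μ) = w`. -/
noncomputable def Apow (G : CDG) (F : G.A → ℝ) (β : ℝ) (n : ℕ) (v w : G.V) : ℝ≥0∞ :=
  ∑' μ : {μ : FinPath G // μ.length = n ∧ μ.fsrc = v ∧ μ.frng = w},
    ENNReal.ofReal (Real.exp (-(β * pot F μ.1)))

/-- An `A(β)`-harmonic vector: non-zero, finite, non-negative, and harmonic at
every vertex. -/
def IsHarmonicVec (G : CDG) (F : G.A → ℝ) (β : ℝ) (ψ : G.V → ℝ≥0∞) : Prop :=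
  ψ ≠ 0 ∧ (∀ v : G.V, ψ v ≠ ⊤) ∧
    ∀ v : G.V, ψ v =
      ∑' a : {a : G.A // G.src a = v},
        ENNReal.ofReal (Real.exp (-(β * F a.1))) * ψ (G.rng a.1)

end CDG

/-! `Z(v)` is the disjoint union of the cylinders `Z(a)` over the arrows `a` with `s(a) = v`, and
since `σ(Z(a)) = Z(r(a))`, conformality with `B = P(G)` gives `m(Z(a)) = e^{-βF(a)} m(Z(r(a)))`. -/

namespace CDG

variable {G : CDG}

def consPath (a : G.A) (q : G.PathSpace) (h : G.rng a = G.src (q.1 0)) : G.PathSpace :=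
  ⟨fun | 0 => a | i + 1 => q.1 i, fun | 0 => h | i + 1 => q.2 i⟩

lemma measurableSet_setOf_head_eq (a : G.A) :
    MeasurableSet {p : G.PathSpace | p.1 0 = a} :=
  (measurable_subtype_coe.eval : Measurable fun p : G.PathSpace => p.1 0)
    (measurableSet_singleton a)

lemma shift_image_setOf_head_eq (a : G.A) :
    shift '' {p : G.PathSpace | p.1 0 = a} = cylV G (G.rng a) := by
  ext q
  constructor
  · rintro ⟨p, rfl, rfl⟩
    exact (p.2 0).symm
  · intro hq
    exact ⟨consPath a q hq.symm, rfl, rfl⟩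

lemma iUnion_setOf_head_eq (v : G.V) :
    ⋃ a : {a : G.A // G.src a = v}, {p : G.PathSpace | p.1 0 = a.1} = cylV G v := by
  ext p
  simp only [Set.mem_iUnion, Set.mem_ofPred_eq, cylV]
  exact ⟨fun ⟨a, ha⟩ => ha ▸ a.2, fun hp => ⟨⟨p.1 0, hp⟩, rfl⟩⟩

lemma measure_cylV_eq_tsum (m : Measure G.PathSpace) (v : G.V) :
    m (cylV G v) = ∑' a : {a : G.A // G.src a = v}, m {p : G.PathSpace | p.1 0 = a.1} := by
  rw [← iUnion_setOf_head_eq, measure_iUnion]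
  · intro a b hab
    exact Set.disjoint_left.2 fun p hpa hpb => hab (Subtype.ext (hpa.symm.trans hpb))
  · exact fun a => measurableSet_setOf_head_eq a.1

lemma measure_cylV_ne_zero {m : Measure G.PathSpace} (hm : m ≠ 0) :
    (fun v => m (cylV G v)) ≠ 0 := by
  intro h
  have hcover : (⋃ v, cylV G v) = Set.univ :=
    Set.eq_univ_of_forall fun p => Set.mem_iUnion.2 ⟨_, rfl⟩
  apply hm
  rw [← Measure.measure_univ_eq_zero, ← hcover, measure_iUnion_null_iff]
  exact congrFun h

lemma IsConformal.measure_setOf_head_eq {F : G.A → ℝ} {β : ℝ} {m : Measure G.PathSpace}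
    (hm : IsConformal G F β m) (a : G.A) :
    m {p : G.PathSpace | p.1 0 = a} =
      ENNReal.ofReal (Real.exp (-(β * F a))) * m (cylV G (G.rng a)) := by
  have hshift := hm.conformal a Set.univ MeasurableSet.univ
  rw [Set.univ_inter, shift_image_setOf_head_eq] at hshift
  have hinv : ENNReal.ofReal (Real.exp (-(β * F a))) *
      ENNReal.ofReal (Real.exp (β * F a)) = 1 := by
    rw [← ENNReal.ofReal_mul (Real.exp_nonneg _), ← Real.exp_add, neg_add_cancel,
      Real.exp_zero, ENNReal.ofReal_one]
  rw [hshift, ← mul_assoc, hinv, one_mul]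

end CDG

open CDG in
/-- for an `e^{βF}`-conformal measure `m`, the vector `v ↦ m(Z(v))` is an
`A(β)`-harmonic vector. -/
theorem stmt11 (G : CDG) (F : G.A → ℝ) (β : ℝ) (m : MeasureTheory.Measure G.PathSpace)
    (hm : IsConformal G F β m) :
    IsHarmonicVec G F β (fun v => m (cylV G v)) := by
  exact ⟨measure_cylV_ne_zero hm.ne_zero, fun v => (hm.vert_fin v).ne, fun v =>
    (measure_cylV_eq_tsum m v).trans <| tsum_congr fun a => hm.measure_setOf_head_eq a.1⟩
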